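/- For every real w with 1 < w ≤ 3, one has ψ((w+1)/2) - ψ(w/2) < 1/w + 2/(w(w+1)), where ψ is the digamma function. -/

import Mathlib

/-!
Write `D x = ψ(x + 1/2) - ψ(x)`. Convexity of `log Γ` makes `ψ` monotone, so `D x ≤ ψ(x + 1) - ψ(x) = 1/x`.
The recurrence `ψ(x + 1) = ψ(x) + 1/x` gives `D x = D (x + 1) + 1/x - 2/(2x + 1)`, and by the harmonic–arithmetic
mean inequality `1/(x + 1) ≤ 1/(2x + 1) + 1/(2x + 3)` each such step sharpens the crude bound, yielding
`D x ≤ 1/x - 1/(2x + 1) + 1/(2x + 2n + 1)` for every `n`. With `x = w/2` and `n = 5` this beats the claimed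
bound exactly when `w² < 11`.
-/

open Real Set

/-- The digamma function `ψ = (log ∘ Γ)'`. -/
noncomputable def digamma (t : ℝ) : ℝ := deriv (fun s => Real.log (Real.Gamma s)) t

lemma differentiableAt_log_Gamma {x : ℝ} (hx : 0 < x) :
    DifferentiableAt ℝ (fun s => log (Gamma s)) x :=
  (differentiableAt_Gamma fun m => by linarith [(m.cast_nonneg : (0 : ℝ) ≤ m)]).log
    (Gamma_pos_of_pos hx).ne'

lemma digamma_add_one {x : ℝ} (hx : 0 < x) : digamma (x + 1) = digamma x + 1 / x := by
  unfold digamma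
  rw [← deriv_comp_add_const, one_div, ← deriv_log,
    ← deriv_fun_add (differentiableAt_log_Gamma hx) (differentiableAt_log hx.ne')]
  apply Filter.EventuallyEq.deriv_eq
  filter_upwards [eventually_gt_nhds hx] with t ht
  rw [Gamma_add_one ht.ne', log_mul ht.ne' (Gamma_pos_of_pos ht).ne', add_comm]

lemma monotoneOn_digamma : MonotoneOn digamma (Ioi 0) :=
  convexOn_log_Gamma.monotoneOn_deriv fun _ hx => differentiableAt_log_Gamma hx

lemma digamma_add_half_sub_le {x : ℝ} (hx : 0 < x) : digamma (x + 1 / 2) - digamma x ≤ 1 / x := by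
  have hmono : digamma (x + 1 / 2) ≤ digamma (x + 1) :=
    monotoneOn_digamma (mem_Ioi.2 (by linarith)) (mem_Ioi.2 (by linarith)) (by linarith)
  linarith [digamma_add_one hx]

lemma digamma_add_half_sub_le_of_nat (n : ℕ) {x : ℝ} (hx : 0 < x) :
    digamma (x + 1 / 2) - digamma x ≤ 1 / x - 1 / (2 * x + 1) + 1 / (2 * x + 2 * n + 1) := by
  induction n generalizing x with
  | zero =>
    simpa using digamma_add_half_sub_le hx
  | succ n ih =>
    have hx1 : 0 < x + 1 := by linarith
    have hstep := ih hx1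
    have hrec := digamma_add_one hx
    have hrec_half := digamma_add_one (x := x + 1 / 2) (by linarith)
    rw [add_right_comm] at hrec_half
    have hHM : 1 / (x + 1) ≤ 1 / (2 * x + 1) + 1 / (2 * x + 3) := by
      rw [div_add_div _ _ (by positivity) (by positivity), div_le_div_iff₀ hx1 (by positivity)]
      nlinarith
    have hhalf : 1 / (x + 1 / 2) = 2 / (2 * x + 1) := by field_simp
    push_cast
    calc digamma (x + 1 / 2) - digamma x
        = digamma (x + 1 + 1 / 2) - digamma (x + 1) + 1 / x - 1 / (x + 1 / 2) := by linarith
      _ ≤ 1 / (x + 1) - 1 / (2 * (x + 1) + 1) + 1 / (2 * (x + 1) + 2 * n + 1)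
            + 1 / x - 2 / (2 * x + 1) := by rw [← hhalf]; linarith
      _ ≤ 1 / x - 1 / (2 * x + 1) + 1 / (2 * x + 2 * (n + 1) + 1) := by
        ring_nf at hHM ⊢
        linarith

/-- For `1 < w ≤ 3`, `ψ((w+1)/2) - ψ(w/2) < 1/w + 2/(w(w+1))`. -/
theorem digamma_half_diff_upper_of_le_three (w : ℝ) (hw1 : 1 < w) (hw3 : w ≤ 3) :
    digamma ((w + 1) / 2) - digamma (w / 2) < 1 / w + 2 / (w * (w + 1)) := by
  have hw0 : 0 < w := by linarith
  have hbound := digamma_add_half_sub_le_of_nat 5 (half_pos hw0)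
  have hgap : 1 / (w / 2) - 1 / (2 * (w / 2) + 1) + 1 / (2 * (w / 2) + 2 * (5 : ℕ) + 1)
      < 1 / w + 2 / (w * (w + 1)) := by
    have hsq : w ^ 2 < 11 := by nlinarith
    rw [← sub_pos]
    have hdiff : 1 / w + 2 / (w * (w + 1))
        - (1 / (w / 2) - 1 / (2 * (w / 2) + 1) + 1 / (2 * (w / 2) + 2 * (5 : ℕ) + 1))
        = (11 - w ^ 2) / (w * (w + 1) * (w + 11)) := by
      push_cast
      field_simp
      ring
    rw [hdiff]
    exact div_pos (by linarith) (by positivity)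
  rw [show (w + 1) / 2 = w / 2 + 1 / 2 by ring]
  linarith
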